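/- Let G be a finite abelian group, V a finite dimensional G-graded vector space over a field k, and A = END(V). Then there is an exact sequence 0 → INN(A) → Aut_gr(A) → I(V) → 0, where Aut_gr(A) is the group of degree-preserving algebra automorphisms of A, INN(A) the subgroup of inner automorphisms induced by degree-e automorphisms of V, and I(V) = {σ | V(σ) ≅ V}. In particular, every degree-preserving algebra automorphism of END(V) is conjugation by a homogeneous invertible element. -/
import Mathlib


/-- The `σ`-component of the graded endomorphism algebra `END(V)` of a
`G`-graded vector space `V = ⊕ 𝒱 g`:
`END(V)_σ = {f ∈ End(V) | f(V_g) ⊆ V_{σg} for all g}`. -/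
def ENDdeg {k : Type*} [Field k] {G : Type*} [CommGroup G]
    {V : Type*} [AddCommGroup V] [Module k V]
    (𝒱 : G → Submodule k V) (σ : G) : Submodule k (Module.End k V) where
  carrier := {f | ∀ g : G, ∀ v ∈ 𝒱 g, f v ∈ 𝒱 (σ * g)}
  add_mem' := by
    intro a b ha hb g v hv
    simpa using (𝒱 (σ * g)).add_mem (ha g v hv) (hb g v hv)
  zero_mem' := by intro g v hv; simp
  smul_mem' := by
    intro c f hf g v hv
    simpa using (𝒱 (σ * g)).smul_mem c (hf g v hv)



set_option linter.unusedSectionVars false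
namespace GradedRZhelper

variable {k : Type*} [Field k] {G : Type*} [CommGroup G]
  [Fintype G] [DecidableEq G] {V : Type*} [AddCommGroup V] [Module k V]

lemma exists_dual {u : V} (hu : u ≠ 0) : ∃ ℓ : V →ₗ[k] k, ℓ u = 1 := by
  obtain ⟨φ, hφ⟩ : ∃ φ : Module.Dual k V, φ u ≠ 0 := by
    by_contra h
    push_neg at h
    exact hu ((Module.forall_dual_apply_eq_zero_iff k u).mp h)
  exact ⟨(φ u)⁻¹ • φ, by simp [inv_mul_cancel₀ hφ]⟩

variable (𝒱 : G → Submodule k V)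

/-- Projection onto the `g`-component. -/
noncomputable def pr (hV : DirectSum.IsInternal 𝒱) (g : G) : V →ₗ[k] V where
  toFun v := ((LinearEquiv.ofBijective (DirectSum.coeLinearMap 𝒱) hV).symm v g : V)
  map_add' v w := by simp [map_add, DirectSum.add_apply]
  map_smul' c v := by simp [map_smul, DirectSum.smul_apply]

lemma pr_mem (hV : DirectSum.IsInternal 𝒱) (g : G) (v : V) : pr 𝒱 hV g v ∈ 𝒱 g := SetLike.coe_mem _

lemma pr_of_mem_same (hV : DirectSum.IsInternal 𝒱) {g : G} {v : V} (hv : v ∈ 𝒱 g) : pr 𝒱 hV g v = v := by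
  simp [pr, hV.ofBijective_coeLinearMap_of_mem hv]

lemma pr_of_mem_ne (hV : DirectSum.IsInternal 𝒱) {g h : G} {v : V} (hv : v ∈ 𝒱 h) (hne : h ≠ g) :
    pr 𝒱 hV g v = 0 := by
  simp [pr, hV.ofBijective_coeLinearMap_of_mem_ne hne hv]

lemma sum_pr (hV : DirectSum.IsInternal 𝒱) (v : V) : ∑ g : G, pr 𝒱 hV g v = v := by
  set e := LinearEquiv.ofBijective (DirectSum.coeLinearMap 𝒱) hV with he
  conv_rhs => rw [← e.apply_symm_apply v]
  have : e.symm v = ∑ g : G, DirectSum.of (fun g => 𝒱 g) g (e.symm v g) :=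
    (DirectSum.sum_univ_of _).symm
  calc ∑ g : G, pr 𝒱 hV g v
      = ∑ g : G, (DirectSum.coeLinearMap 𝒱) (DirectSum.of (fun g => 𝒱 g) g (e.symm v g)) := by
        refine Finset.sum_congr rfl fun g _ => ?_
        simp [pr, he]
    _ = (DirectSum.coeLinearMap 𝒱) (∑ g : G, DirectSum.of (fun g => 𝒱 g) g (e.symm v g)) := by
        rw [map_sum]
    _ = e (e.symm v) := by rw [← this]; rfl

lemma deg_unique (hV : DirectSum.IsInternal 𝒱) {g h : G} {u : V} (hg : u ∈ 𝒱 g) (hh : u ∈ 𝒱 h) (hu : u ≠ 0) :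
    g = h := by
  by_contra hne
  have h1 : pr 𝒱 hV h u = u := pr_of_mem_same 𝒱 hV hh
  have h2 : pr 𝒱 hV h u = 0 := pr_of_mem_ne 𝒱 hV hg hne
  exact hu (h1.symm.trans h2)

/-- A homogeneous rank-one map sending `u` to `v`. -/
lemma mk_hom (hV : DirectSum.IsInternal 𝒱) {g g' : G} {u v : V} (hu : u ∈ 𝒱 g) (hun : u ≠ 0) (hv : v ∈ 𝒱 g') :
    ∃ a : Module.End k V, a ∈ ENDdeg 𝒱 (g' * g⁻¹) ∧ a u = v ∧
      ∀ x : V, ∃ c : k, a x = c • v := by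
  obtain ⟨ℓ, hℓ⟩ := exists_dual (k := k) hun
  refine ⟨LinearMap.smulRight (ℓ ∘ₗ pr 𝒱 hV g) v, ?_, ?_, fun x => ⟨_, rfl⟩⟩
  · intro h x hx
    rcases eq_or_ne h g with rfl | hne
    · have : (LinearMap.smulRight (ℓ ∘ₗ pr 𝒱 hV h) v) x ∈ 𝒱 g' :=
        (𝒱 g').smul_mem _ hv
      rwa [show g' * h⁻¹ * h = g' from inv_mul_cancel_right g' h]
    · simp [pr_of_mem_ne 𝒱 hV hx hne]
  · simp [pr_of_mem_same 𝒱 hV hu, hℓ]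

/-- Skolem–Noether for `End k V`. -/
lemma skolem [FiniteDimensional k V] {v0 : V} (hv0 : v0 ≠ 0)
    (Φ : Module.End k V ≃ₐ[k] Module.End k V) :
    ∃ f : V ≃ₗ[k] V, ∀ a : Module.End k V,
      Φ a = (f : V →ₗ[k] V) ∘ₗ a ∘ₗ (f.symm : V →ₗ[k] V) := by
  obtain ⟨ℓ, hℓ⟩ := exists_dual (k := k) hv0
  set e : Module.End k V := LinearMap.smulRight ℓ v0 with he
  have hee : e * e = e := by
    ext x
    simp [he, Module.End.mul_apply, hℓ, smul_smul]
  have hene : Φ e ≠ 0 := by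
    intro h
    have he0 : e = 0 := by
      apply Φ.injective
      simp [h]
    have := congrArg (fun m : Module.End k V => m v0) he0
    simp [he, hℓ] at this
    exact hv0 this
  obtain ⟨w0, hw0⟩ : ∃ w0 : V, Φ e w0 ≠ 0 := by
    by_contra h
    push_neg at h
    exact hene (LinearMap.ext fun x => h x)
  set w : V := Φ e w0 with hw
  have hEw : Φ e w = w := by
    rw [hw, ← Module.End.mul_apply, ← map_mul, hee]
  set f0 : V →ₗ[k] V :=
    { toFun := fun v => Φ (LinearMap.smulRight ℓ v) w
      map_add' := by
        intro v v'
        have : LinearMap.smulRight ℓ (v + v') =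
            LinearMap.smulRight ℓ v + LinearMap.smulRight ℓ v' := by
          ext x; simp [smul_add]
        simp [this]
      map_smul' := by
        intro c v
        have : LinearMap.smulRight ℓ (c • v) = c • LinearMap.smulRight ℓ v := by
          ext x; simp [smul_smul, mul_comm]
        simp [this] } with hf0
  have hconj : ∀ (b : Module.End k V) (v : V), f0 (b v) = Φ b (f0 v) := by
    intro b v
    have h1 : LinearMap.smulRight ℓ (b v) = b * LinearMap.smulRight ℓ v := by
      ext x; simp [Module.End.mul_apply]
    show Φ (LinearMap.smulRight ℓ (b v)) w = _
    rw [h1, map_mul]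
    rfl
  have hfv0 : f0 v0 = w := by
    show Φ (LinearMap.smulRight ℓ v0) w = w
    rw [← he]; exact hEw
  have hinj : Function.Injective f0 := by
    rw [← LinearMap.ker_eq_bot]
    rw [LinearMap.ker_eq_bot']
    intro m hm
    by_contra hm0
    obtain ⟨ℓ', hℓ'⟩ := exists_dual (k := k) hm0
    have h1 : f0 ((LinearMap.smulRight ℓ' v0) m) = Φ (LinearMap.smulRight ℓ' v0) (f0 m) :=
      hconj _ m
    rw [hm, map_zero] at h1
    rw [LinearMap.smulRight_apply, hℓ', one_smul, hfv0] at h1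
    exact hw0 h1
  have hbij : Function.Bijective f0 :=
    ⟨hinj, LinearMap.injective_iff_surjective.mp hinj⟩
  refine ⟨LinearEquiv.ofBijective f0 hbij, ?_⟩
  intro a
  ext x
  have h2 : (LinearEquiv.ofBijective f0 hbij).symm x =
      (LinearEquiv.ofBijective f0 hbij).symm x := rfl
  calc Φ a x
      = Φ a (f0 ((LinearEquiv.ofBijective f0 hbij).symm x)) := by
        rw [show f0 ((LinearEquiv.ofBijective f0 hbij).symm x) = x from
          (LinearEquiv.ofBijective f0 hbij).apply_symm_apply x]
    _ = f0 (a ((LinearEquiv.ofBijective f0 hbij).symm x)) := (hconj a _).symm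
    _ = _ := rfl

/-- The image under a graded conjugation of a homogeneous vector is homogeneous. -/
lemma homog (hV : DirectSum.IsInternal 𝒱) (Φ : Module.End k V ≃ₐ[k] Module.End k V)
    (hΦ : ∀ τ : G, ∀ a ∈ ENDdeg 𝒱 τ, Φ a ∈ ENDdeg 𝒱 τ)
    (f : V ≃ₗ[k] V)
    (hf : ∀ a : Module.End k V,
      Φ a = (f : V →ₗ[k] V) ∘ₗ a ∘ₗ (f.symm : V →ₗ[k] V))
    {g0 : G} {u0 : V} (hu0 : u0 ∈ 𝒱 g0) (hu0' : u0 ≠ 0) :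
    ∃ h0 : G, f u0 ∈ 𝒱 h0 := by
  obtain ⟨e, heD, heu, hspan⟩ := mk_hom 𝒱 hV hu0 hu0' hu0
  set w : V := f u0 with hwdef
  have hwne : w ≠ 0 := f.map_ne_zero_iff.mpr hu0'
  set E : Module.End k V := Φ e with hE
  have hED : E ∈ ENDdeg 𝒱 (g0 * g0⁻¹) := hΦ _ e heD
  have hEapp : ∀ x : V, E x = f (e (f.symm x)) := by
    intro x
    rw [hE, hf e]
    rfl
  have hEform : ∀ x : V, ∃ c : k, E x = c • w := by
    intro x
    obtain ⟨c, hc⟩ := hspan (f.symm x)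
    refine ⟨c, ?_⟩
    rw [hEapp, hc, map_smul]
  have hEw : E w = w := by
    rw [hEapp, hwdef, f.symm_apply_apply, heu]
  by_contra hno
  push_neg at hno
  have hzero : ∀ τ : G, E (pr 𝒱 hV τ w) = 0 := by
    intro τ
    obtain ⟨c, hc⟩ := hEform (pr 𝒱 hV τ w)
    rcases eq_or_ne c 0 with rfl | hcne
    · rw [hc, zero_smul]
    · exfalso
      have hmem : E (pr 𝒱 hV τ w) ∈ 𝒱 (g0 * g0⁻¹ * τ) :=
        hED τ _ (pr_mem 𝒱 hV τ w)
    
      rw [hc] at hmem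
      have : w ∈ 𝒱 (g0 * g0⁻¹ * τ) := by
        have h2 := (𝒱 (g0 * g0⁻¹ * τ)).smul_mem c⁻¹ hmem
        rwa [smul_smul, inv_mul_cancel₀ hcne, one_smul] at h2
      exact hno _ this
  have : w = 0 := by
    calc w = E w := hEw.symm
      _ = E (∑ τ : G, pr 𝒱 hV τ w) := by rw [sum_pr]
      _ = ∑ τ : G, E (pr 𝒱 hV τ w) := map_sum E _ _
      _ = 0 := by simp [hzero]
  exact hwne this

lemma key (hV : DirectSum.IsInternal 𝒱) (Φ : Module.End k V ≃ₐ[k] Module.End k V)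
    (hΦ : ∀ τ : G, ∀ a ∈ ENDdeg 𝒱 τ, Φ a ∈ ENDdeg 𝒱 τ)
    (f : V ≃ₗ[k] V)
    (hf : ∀ a : Module.End k V,
      Φ a = (f : V →ₗ[k] V) ∘ₗ a ∘ₗ (f.symm : V →ₗ[k] V))
    {g0 : G} {u0 : V} (hu0 : u0 ∈ 𝒱 g0) (hu0' : u0 ≠ 0) :
    ∃ σ : G, ∀ g : G, ∀ u ∈ 𝒱 g, f u ∈ 𝒱 (σ * g) := by
  obtain ⟨h0, hh0⟩ := homog 𝒱 hV Φ hΦ f hf hu0 hu0'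
  refine ⟨h0 * g0⁻¹, ?_⟩
  intro g u hu
  obtain ⟨a, haD, hau, -⟩ := mk_hom 𝒱 hV hu0 hu0' hu
  have happ : Φ a (f u0) = f u := by
    rw [hf a]
    show f (a (f.symm (f u0))) = f u
    rw [f.symm_apply_apply, hau]
  have hmem : Φ a (f u0) ∈ 𝒱 (g * g0⁻¹ * h0) := hΦ _ a haD h0 (f u0) hh0
  rw [happ] at hmem
  have heq : g * g0⁻¹ * h0 = h0 * g0⁻¹ * g := by
    rw [mul_assoc, mul_assoc, mul_comm (g0⁻¹) h0, ← mul_assoc, mul_comm g h0,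
      mul_assoc, mul_comm g, ← mul_assoc]
  rwa [heq] at hmem

lemma exists_homog (hV : DirectSum.IsInternal 𝒱) (hnt : ∃ v : V, v ≠ 0) :
    ∃ (g : G) (u : V), u ∈ 𝒱 g ∧ u ≠ 0 := by
  obtain ⟨v, hv⟩ := hnt
  by_contra h
  push_neg at h
  apply hv
  rw [← sum_pr 𝒱 hV v]
  apply Finset.sum_eq_zero
  intro g _
  exact h g _ (pr_mem 𝒱 hV g v)

lemma conj_mem (f : V ≃ₗ[k] V) (σ : G)
    (h1 : ∀ g : G, ∀ u ∈ 𝒱 g, f u ∈ 𝒱 (σ * g))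
    (h2 : ∀ g : G, ∀ u ∈ 𝒱 g, f.symm u ∈ 𝒱 (σ⁻¹ * g))
    {τ : G} {a : Module.End k V} (ha : a ∈ ENDdeg 𝒱 τ) :
    (f : V →ₗ[k] V) ∘ₗ a ∘ₗ (f.symm : V →ₗ[k] V) ∈ ENDdeg 𝒱 τ := by
  intro g v hv
  have m1 := h2 g v hv
  have m2 := ha _ _ m1
  have m3 := h1 _ _ m2
  have heq : σ * (τ * (σ⁻¹ * g)) = τ * g := by
    rw [mul_left_comm, mul_inv_cancel_left]
  rw [← heq]
  simpa using m3

lemma symm_maps (f : V ≃ₗ[k] V) (σ : G)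
    (hm : ∀ g : G, Submodule.map (f : V →ₗ[k] V) (𝒱 g) = 𝒱 (σ * g)) :
    ∀ g : G, ∀ u ∈ 𝒱 g, f.symm u ∈ 𝒱 (σ⁻¹ * g) := by
  intro g u hu
  have h1 : u ∈ 𝒱 (σ * (σ⁻¹ * g)) := by rwa [mul_inv_cancel_left]
  rw [← hm] at h1
  obtain ⟨x, hx, hfx⟩ := h1
  have : f.symm u = x := by rw [← hfx]; exact f.symm_apply_apply x
  rwa [this]

end GradedRZhelper

open GradedRZhelper in
/-- For a finite abelian group `G` and a finite dimensional
`G`-graded vector space `V` with `A = END(V)`, the sequence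
`0 → INN(A) → Aut_gr(A) → I(V) → 0` is exact.  Concretely:
(a) (graded Skolem–Noether) every degree-preserving algebra automorphism `Φ` of
`A` is conjugation by a linear automorphism `f` of `V` homogeneous of some
degree `σ ∈ I(V)`; and (b) conversely, conjugation by any automorphism of `V`
homogeneous of degree `σ` is a degree-preserving algebra automorphism of `A`
(so the map `Aut_gr(A) → I(V)` is surjective, with kernel `INN(A)` the inner
automorphisms induced by degree-`e` automorphisms of `V`). -/
theorem graded_RosenbergZelinsky {k : Type*} [Field k] {G : Type*} [CommGroup G]
    [Fintype G] [DecidableEq G] {V : Type*} [AddCommGroup V] [Module k V]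
    [FiniteDimensional k V]
    (𝒱 : G → Submodule k V) (hV : DirectSum.IsInternal 𝒱) :
    (∀ Φ : Module.End k V ≃ₐ[k] Module.End k V,
      (∀ σ : G, Submodule.map Φ.toLinearMap (ENDdeg 𝒱 σ) = ENDdeg 𝒱 σ) →
      ∃ (σ : G) (f : V ≃ₗ[k] V),
        (∀ g : G, Submodule.map (f : V →ₗ[k] V) (𝒱 g) = 𝒱 (σ * g)) ∧
        ∀ a : Module.End k V,
          Φ a = (f : V →ₗ[k] V) ∘ₗ a ∘ₗ (f.symm : V →ₗ[k] V)) ∧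
    (∀ (σ : G) (f : V ≃ₗ[k] V),
      (∀ g : G, Submodule.map (f : V →ₗ[k] V) (𝒱 g) = 𝒱 (σ * g)) →
      ∃ Φ : Module.End k V ≃ₐ[k] Module.End k V,
        (∀ σ' : G, Submodule.map Φ.toLinearMap (ENDdeg 𝒱 σ') = ENDdeg 𝒱 σ') ∧
        ∀ a : Module.End k V,
          Φ a = (f : V →ₗ[k] V) ∘ₗ a ∘ₗ (f.symm : V →ₗ[k] V)) := by
  constructor
  · -- part (a)
    intro Φ hΦ
    rcases subsingleton_or_nontrivial V with hs | hnt
    · refine ⟨1, LinearEquiv.refl k V, ?_, ?_⟩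
      · intro g
        exact Subsingleton.elim _ _
      · intro a
        exact Subsingleton.elim _ _
    · have hΦ1 : ∀ τ : G, ∀ a ∈ ENDdeg 𝒱 τ, Φ a ∈ ENDdeg 𝒱 τ := by
        intro τ a ha
        rw [← hΦ τ]
        exact ⟨a, ha, rfl⟩
      have hΦ2 : ∀ τ : G, ∀ a ∈ ENDdeg 𝒱 τ, Φ.symm a ∈ ENDdeg 𝒱 τ := by
        intro τ a ha
        rw [← hΦ τ] at ha
        obtain ⟨b, hb, hba⟩ := ha
        have : Φ.symm a = b := by
          rw [← hba]
          exact Φ.symm_apply_apply b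
        rwa [this]
      obtain ⟨g0, u0, hu0, hu0'⟩ := exists_homog 𝒱 hV (exists_ne 0)
      obtain ⟨f, hf⟩ := skolem hu0' Φ
      have hf' : ∀ a : Module.End k V,
          Φ.symm a = (f.symm : V →ₗ[k] V) ∘ₗ a ∘ₗ ((f.symm).symm : V →ₗ[k] V) := by
        intro a
        rw [f.symm_symm]
        have : Φ ((f.symm : V →ₗ[k] V) ∘ₗ a ∘ₗ (f : V →ₗ[k] V)) = a := by
          rw [hf]
          ext x
          simp
        calc Φ.symm a = Φ.symm (Φ ((f.symm : V →ₗ[k] V) ∘ₗ a ∘ₗ (f : V →ₗ[k] V))) := by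
              rw [this]
          _ = (f.symm : V →ₗ[k] V) ∘ₗ a ∘ₗ (f : V →ₗ[k] V) := Φ.symm_apply_apply _
      obtain ⟨σ, hσ⟩ := key 𝒱 hV Φ hΦ1 f hf hu0 hu0'
      obtain ⟨σ', hσ'⟩ := key 𝒱 hV Φ.symm hΦ2 f.symm hf' hu0 hu0'
      refine ⟨σ, f, ?_, hf⟩
      intro g
      apply le_antisymm
      · rintro _ ⟨u, hu, rfl⟩
        exact hσ g u hu
      · intro v hv
        rcases eq_or_ne v 0 with rfl | hvne
        · exact Submodule.zero_mem _
        · have h1 : f.symm v ∈ 𝒱 (σ' * (σ * g)) := hσ' _ v hv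
          have h2 : f (f.symm v) ∈ 𝒱 (σ * (σ' * (σ * g))) := hσ _ _ h1
          rw [f.apply_symm_apply] at h2
          have heq : σ * g = σ * (σ' * (σ * g)) :=
            deg_unique 𝒱 hV hv h2 hvne
          have hg : σ' * (σ * g) = g := (mul_left_cancel heq).symm
          rw [hg] at h1
          exact ⟨f.symm v, h1, f.apply_symm_apply v⟩
  · -- part (b)
    intro σ f hm
    have h1 : ∀ g : G, ∀ u ∈ 𝒱 g, f u ∈ 𝒱 (σ * g) := by
      intro g u hu
      rw [← hm g]
      exact ⟨u, hu, rfl⟩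
    have h2 := symm_maps 𝒱 f σ hm
    have h1' : ∀ g : G, ∀ u ∈ 𝒱 g, f.symm.symm u ∈ 𝒱 (σ⁻¹⁻¹ * g) := by
      intro g u hu
      rw [f.symm_symm, inv_inv]
      exact h1 g u hu
    set Φ : Module.End k V ≃ₐ[k] Module.End k V :=
      AlgEquiv.ofLinearEquiv (LinearEquiv.conj f)
        (by ext x; simp [LinearEquiv.conj_apply])
        (by intro a b; ext x; simp [LinearEquiv.conj_apply, Module.End.mul_apply]) with hΦdef
    have hΦa : ∀ a : Module.End k V,
        Φ a = (f : V →ₗ[k] V) ∘ₗ a ∘ₗ (f.symm : V →ₗ[k] V) := by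
      intro a
      show LinearEquiv.conj f a = _
      rw [LinearEquiv.conj_apply, LinearMap.comp_assoc]
    refine ⟨Φ, ?_, hΦa⟩
    intro σ'
    apply le_antisymm
    · rintro _ ⟨a, ha, rfl⟩
      show Φ a ∈ ENDdeg 𝒱 σ'
      rw [hΦa]
      exact conj_mem 𝒱 f σ h1 h2 ha
    · intro b hb
      refine ⟨(f.symm : V →ₗ[k] V) ∘ₗ b ∘ₗ (f : V →ₗ[k] V), ?_, ?_⟩
      · have := conj_mem 𝒱 f.symm σ⁻¹ h2 h1' hb
        simpa using this
      · show Φ _ = b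
        rw [hΦa]
        ext x
        simp
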